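/- Let (h_n)_{n≥1} be reals with h_1 = 1 and, for 2 ≤ n ≤ N, satisfying the stationarity relation h_n = (n/(2 D_{n,N})) ∑_{m=1}^{n-1} h_m h_{n-m}, where D_{n,N} = n/4 + (2n²-n)/(4(N-1)). Then |h_n| ≤ 8^{n-1}/(2n-1) for all 1 ≤ n ≤ N. -/

import Mathlib

/-!
Since `D_{n,N} ≥ n/4`, the factor `n/(2 D_{n,N})` lies in `[0, 2]`, so by strong induction `|h_n|`
is dominated by the solution `a_n = 2^{n-1} C_{n-1}` of `a_n = 2 ∑_{m=1}^{n-1} a_m a_{n-m}`,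
`a_1 = 1` (the Catalan convolution). The stated bound then follows from `(2k+1) C_k ≤ 4^k`, which
propagates by induction because `C_{k+1}/C_k = 2(2k+1)/(k+2)`.
-/

open Finset

/-- The dissipation constant `D_{n,N} = n/4 + (2n² - n)/(4(N-1))`. -/
noncomputable def dissipationConst (n N : ℕ) : ℝ :=
  (n : ℝ) / 4 + (2 * (n : ℝ) ^ 2 - (n : ℝ)) / (4 * ((N : ℝ) - 1))

theorem succ_succ_mul_catalan_succ (k : ℕ) :
    (k + 2) * catalan (k + 1) = 2 * (2 * k + 1) * catalan k := by
  have h := Nat.succ_mul_centralBinom_succ k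
  rw [← succ_mul_catalan_eq_centralBinom, ← succ_mul_catalan_eq_centralBinom] at h
  exact Nat.eq_of_mul_eq_mul_left k.succ_pos (by linarith)

theorem two_mul_add_one_mul_catalan_le_four_pow : ∀ k : ℕ, (2 * k + 1) * catalan k ≤ 4 ^ k
  | 0 => by simp
  | k + 1 => by
    have ih := two_mul_add_one_mul_catalan_le_four_pow k
    refine Nat.le_of_mul_le_mul_left ?_ (show 0 < k + 2 by omega)
    calc (k + 2) * ((2 * (k + 1) + 1) * catalan (k + 1))
        = (2 * (2 * k + 3)) * ((2 * k + 1) * catalan k) := by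
          rw [mul_left_comm, succ_succ_mul_catalan_succ]; ring
      _ ≤ (2 * (2 * k + 3)) * 4 ^ k := Nat.mul_le_mul_left _ ih
      _ ≤ (4 * (k + 2)) * 4 ^ k := Nat.mul_le_mul_right _ (by omega)
      _ = (k + 2) * 4 ^ (k + 1) := by ring

def catalanMajorant (n : ℕ) : ℕ :=
  2 ^ (n - 1) * catalan (n - 1)

theorem catalanMajorant_eq_two_mul_sum {n : ℕ} (hn : 2 ≤ n) :
    catalanMajorant n = 2 * ∑ m ∈ Ico 1 n, catalanMajorant m * catalanMajorant (n - m) := by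
  obtain ⟨k, rfl⟩ : ∃ k, n = k + 2 := ⟨n - 2, by omega⟩
  have hterm : ∀ i ∈ range (k + 1), catalanMajorant (1 + i) * catalanMajorant (k + 2 - (1 + i))
      = 2 ^ k * (catalan i * catalan (k - i)) := by
    intro i hi
    have hik : i ≤ k := Nat.lt_succ_iff.mp (mem_range.mp hi)
    rw [catalanMajorant, catalanMajorant, show 1 + i - 1 = i by omega,
      show k + 2 - (1 + i) - 1 = k - i by omega, mul_mul_mul_comm, ← pow_add,
      Nat.add_sub_cancel' hik]
  rw [sum_Ico_eq_sum_range, show k + 2 - 1 = k + 1 from rfl, sum_congr rfl hterm, ← mul_sum,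
    ← Nat.sum_antidiagonal_eq_sum_range_succ (fun i j => catalan i * catalan j), ← catalan_succ',
    catalanMajorant, show k + 2 - 1 = k + 1 from rfl, pow_succ]
  ring

theorem abs_le_catalanMajorant {h : ℕ → ℝ} {N : ℕ} (h1 : |h 1| ≤ 1)
    (hrec : ∀ n, 2 ≤ n → n ≤ N → |h n| ≤ 2 * ∑ m ∈ Ico 1 n, |h m| * |h (n - m)|) :
    ∀ n, 1 ≤ n → n ≤ N → |h n| ≤ catalanMajorant n := by
  intro n
  induction n using Nat.strong_induction_on with
  | _ n ih =>
    intro hn hnN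
    rcases (show n = 1 ∨ 2 ≤ n by omega) with rfl | hn2
    · simpa [catalanMajorant] using h1
    calc |h n| ≤ 2 * ∑ m ∈ Ico 1 n, |h m| * |h (n - m)| := hrec n hn2 hnN
      _ ≤ 2 * ∑ m ∈ Ico 1 n, (catalanMajorant m : ℝ) * catalanMajorant (n - m) := by
          gcongr with m hm
          all_goals
            rw [mem_Ico] at hm
            exact ih _ (by omega) (by omega) (by omega)
      _ = catalanMajorant n := by exact_mod_cast (catalanMajorant_eq_two_mul_sum hn2).symm

theorem catalanMajorant_le_eight_pow_div {n : ℕ} (hn : 1 ≤ n) :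
    (catalanMajorant n : ℝ) ≤ 8 ^ (n - 1) / (2 * n - 1) := by
  obtain ⟨k, rfl⟩ : ∃ k, n = k + 1 := ⟨n - 1, by omega⟩
  have hcat : (2 * k + 1 : ℝ) * catalan k ≤ 4 ^ k := by
    exact_mod_cast two_mul_add_one_mul_catalan_le_four_pow k
  rw [catalanMajorant, Nat.add_sub_cancel, le_div_iff₀ (by push_cast; linarith),
    show (8 : ℝ) ^ k = 2 ^ k * 4 ^ k by rw [← mul_pow]; norm_num]
  push_cast
  nlinarith [pow_pos (two_pos (α := ℝ)) k]

theorem div_two_mul_dissipationConst_mem_Icc {n N : ℕ} (hn : 1 ≤ n) (hN : 1 ≤ N) :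
    (n : ℝ) / (2 * dissipationConst n N) ∈ Set.Icc 0 2 := by
  have hn' : (1 : ℝ) ≤ n := by exact_mod_cast hn
  have hN' : (0 : ℝ) ≤ N - 1 := by rw [sub_nonneg]; exact_mod_cast hN
  have hD : (n : ℝ) / 4 ≤ dissipationConst n N :=
    le_add_of_nonneg_right (div_nonneg (by nlinarith) (by positivity))
  have hD0 : 0 < 2 * dissipationConst n N := by linarith
  exact ⟨by positivity, by rw [div_le_iff₀ hD0]; linarith⟩

theorem stationary_nonrepeated_cumulant_bound_general (N : ℕ)
    (h : ℕ → ℝ) (h1 : h 1 = 1)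
    (hrec : ∀ n, 2 ≤ n → n ≤ N →
      h n = ((n : ℝ) / (2 * dissipationConst n N)) * ∑ m ∈ Finset.Ico 1 n, h m * h (n - m)) :
    ∀ n, 1 ≤ n → n ≤ N → |h n| ≤ (8 : ℝ) ^ (n - 1) / (2 * (n : ℝ) - 1) := by
  have hcmp : ∀ n, 2 ≤ n → n ≤ N → |h n| ≤ 2 * ∑ m ∈ Ico 1 n, |h m| * |h (n - m)| := by
    intro n hn hnN
    obtain ⟨hc0, hc2⟩ := div_two_mul_dissipationConst_mem_Icc (by omega : 1 ≤ n) (by omega : 1 ≤ N)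
    rw [hrec n hn hnN, abs_mul, abs_of_nonneg hc0]
    gcongr
    exact (abs_sum_le_sum_abs _ _).trans_eq (sum_congr rfl fun m _ => abs_mul _ _)
  intro n hn hnN
  exact (abs_le_catalanMajorant (by simp [h1]) hcmp n hn hnN).trans
    (catalanMajorant_le_eight_pow_div hn)

/-- If `h_1 = 1` and `h_n = (n/(2 D_{n,N})) ∑_{m=1}^{n-1} h_m h_{n-m}` for `2 ≤ n ≤ N`,
then `|h_n| ≤ 8^{n-1}/(2n-1)` for all `1 ≤ n ≤ N`. -/
theorem stationary_nonrepeated_cumulant_bound (N : ℕ) (hN : 2 ≤ N)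
    (h : ℕ → ℝ) (h1 : h 1 = 1)
    (hrec : ∀ n, 2 ≤ n → n ≤ N →
      h n = ((n : ℝ) / (2 * dissipationConst n N)) * ∑ m ∈ Finset.Ico 1 n, h m * h (n - m)) :
    ∀ n, 1 ≤ n → n ≤ N → |h n| ≤ (8 : ℝ) ^ (n - 1) / (2 * (n : ℝ) - 1) :=
  stationary_nonrepeated_cumulant_bound_general N h h1 hrec
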